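/- arXiv:2207.11303 — 3 statements merged into one kernel-verified Lean document; each statement's English description precedes it below -/
import Mathlib

section
/- In the setting of a time-inhomogeneous Markov jump process conditioned on its absorption time τ = x, the conditional process Y(s) = X(s)|τ=x is again a Markov jump process on {1,...,p} whose transition intensities are μ̃_{ij}(t|x) = μ_{ij}(t) · (e_j' P̄(t,x) t(x)) / (eᵢ' P̄(t,x) t(x)) for i ≠ j, i.e., the limit as h↓0 of p̃_{ij}(t,t+h|x)/h equals this expression. -/
open Matrix

attribute [local instance] Matrix.linftyOpNormedRing Matrix.linftyOpNormedAlgebra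

/-! Since `P̄(t,t) = I` and `i ≠ j`, the numerator `eᵢ' P̄(t,t+h) e_j` vanishes at `h = 0`, so
divided by `h` it tends to its derivative `(P̄(t,t) T(t))_{ij} = μ_{ij}(t)`. The other factor
`e_j' P̄(t+h,x) t(x)` tends to `e_j' P̄(t,x) t(x)` by continuity of `P̄` in its first endpoint. -/

open Filter Topology

theorem HasDerivAt.matrix_apply {n : Type*} [Fintype n] [DecidableEq n]
    {f : ℝ → Matrix n n ℝ} {f' : Matrix n n ℝ} {a : ℝ} (hf : HasDerivAt f f' a) (i j : n) :
    HasDerivAt (fun r => f r i j) (f' i j) a :=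
  (LinearMap.toContinuousLinearMap (entryLinearMap ℝ ℝ i j)).hasFDerivAt.comp_hasDerivAt a hf

theorem HasDerivAt.tendsto_div_nhdsGT_zero {𝕜 : Type*} [NontriviallyNormedField 𝕜] [Preorder 𝕜]
    {f : 𝕜 → 𝕜} {f' a : 𝕜} (hf : HasDerivAt f f' a) (hfa : f a = 0) :
    Tendsto (fun h => f (a + h) / h) (𝓝[>] 0) (𝓝 f') := by
  simpa only [hfa, sub_zero, smul_eq_mul, inv_mul_eq_div] using hf.tendsto_slope_zero_right

theorem ContinuousAt.tendsto_add_nhdsGT_zero {X : Type*} [TopologicalSpace X] {g : ℝ → X} {a : ℝ}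
    (hg : ContinuousAt g a) :
    Tendsto (fun h => g (a + h)) (𝓝[>] 0) (𝓝 (g a)) := by
  have hshift : Tendsto (fun h : ℝ => a + h) (𝓝[>] 0) (𝓝 a) := by
    simpa using ((continuous_const_add a).tendsto 0).mono_left nhdsWithin_le_nhds
  exact hg.tendsto.comp hshift

theorem conditional_intensity_given_absorption_general
    {p : ℕ} (P : ℝ → ℝ → Matrix (Fin p) (Fin p) ℝ)
    (T : ℝ → Matrix (Fin p) (Fin p) ℝ)
    (tv : ℝ → Fin p → ℝ)
    (t x : ℝ) (i j : Fin p) (hij : i ≠ j)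
    -- Kolmogorov forward equation in the second argument:
    (hode : ∀ u : ℝ, HasDerivAt (fun r => P t r) (P t u * T u) u)
    -- the product integral starts at the identity:
    (hid : P t t = 1)
    -- continuity of the product integral in its first endpoint:
    (hcont : ContinuousAt (fun u => (P u x *ᵥ tv x) j) t) :
    Filter.Tendsto
      (fun h : ℝ =>
        (P t (t + h) i j * ((P (t + h) x *ᵥ tv x) j) / ((P t x *ᵥ tv x) i)) / h)
      (nhdsWithin 0 (Set.Ioi 0))
      (nhds (T t i j * ((P t x *ᵥ tv x) j) / ((P t x *ᵥ tv x) i))) := by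
  have hderiv : HasDerivAt (fun r => P t r i j) (T t i j) t := by
    simpa only [hid, one_mul] using (hode t).matrix_apply i j
  have hstart : P t t i j = 0 := by rw [hid, one_apply_ne hij]
  have hrate := hderiv.tendsto_div_nhdsGT_zero hstart
  have hlim := (hrate.mul hcont.tendsto_add_nhdsGT_zero).div_const ((P t x *ᵥ tv x) i)
  refine hlim.congr fun h => ?_
  ring

/-- The process conditioned on its absorption time `τ = x` has transition
intensities `μ̃_{ij}(t|x) = μ_{ij}(t) · e_j' P̄(t,x) t(x) / (eᵢ' P̄(t,x) t(x))` for
`i ≠ j`: the limit as `h ↓ 0` of `p̃_{ij}(t, t+h | x) / h` equals this expression, where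
`p̃_{ij}(t,s|x) = eᵢ' P̄(t,s) e_j · e_j' P̄(s,x) t(x) / (eᵢ' P̄(t,x) t(x))` is the
conditional transition probability, `μ_{ij}(t) = T(t)_{ij}`, and `P̄` is the product
integral of `T` (continuous in its endpoints, `P̄(t,t) = I`, `∂_s P̄(t,s) = P̄(t,s)T(s)`). -/
theorem conditional_intensity_given_absorption
    {p : ℕ} (P : ℝ → ℝ → Matrix (Fin p) (Fin p) ℝ)
    (T : ℝ → Matrix (Fin p) (Fin p) ℝ)
    (tv : ℝ → Fin p → ℝ) (htv : ∀ x, tv x = -(T x *ᵥ (1 : Fin p → ℝ)))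
    (t x : ℝ) (htx : t < x) (i j : Fin p) (hij : i ≠ j)
    -- Kolmogorov forward equation in the second argument:
    (hode : ∀ u : ℝ, HasDerivAt (fun r => P t r) (P t u * T u) u)
    -- the product integral starts at the identity:
    (hid : P t t = 1)
    -- continuity of the product integral in its first endpoint:
    (hcont : ContinuousAt (fun u => (P u x *ᵥ tv x) j) t)
    (hden : (P t x *ᵥ tv x) i ≠ 0) :
    Filter.Tendsto
      (fun h : ℝ =>
        (P t (t + h) i j * ((P (t + h) x *ᵥ tv x) j) / ((P t x *ᵥ tv x) i)) / h)
      (nhdsWithin 0 (Set.Ioi 0))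
      (nhds (T t i j * ((P t x *ᵥ tv x) j) / ((P t x *ᵥ tv x) i))) :=
  conditional_intensity_given_absorption_general P T tv t x i j hij hode hid hcont
end

section
/- Let A and B be p×p matrices and define the 2p×2p block matrix G = [[A, B],[0, A]]. Then for any t ≥ 0, exp(Gt) = [[exp(At), C(t)],[0, exp(At)]] where C(t) = ∫₀ᵗ exp(A(t-u)) B exp(Au) du. -/
/-!
Both sides of the identity, as functions of `t`, solve the linear equation `F' = G F` with
`F 0 = 1`, and such solutions are unique since `exp (-t G) F t` has derivative zero. For the
right-hand side, writing the upper-right block as `C t = exp (t A) ∫₀ᵗ exp (-u A) B exp (u A) du`,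
the product rule and the fundamental theorem of calculus give `C' = A C + B exp (t A)`.
-/

open Matrix NormedSpace

section BanachAlgebra

variable {𝔸 : Type*} [NormedRing 𝔸] [NormedAlgebra ℝ 𝔸] [CompleteSpace 𝔸]

theorem exp_add_smul (A : 𝔸) (s t : ℝ) : exp ((s + t) • A) = exp (s • A) * exp (t • A) := by
  -- `exp_add_of_commute` is stated for `ℚ`-algebras.
  let _ : NormedAlgebra ℚ 𝔸 := .restrictScalars ℚ ℝ 𝔸
  rw [add_smul, exp_add_of_commute (((Commute.refl A).smul_left s).smul_right t)]

theorem exp_smul_mul_exp_neg_smul (A : 𝔸) (s : ℝ) : exp (s • A) * exp (-s • A) = 1 := by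
  rw [← exp_add_smul, add_neg_cancel, zero_smul, exp_zero]

@[fun_prop]
theorem Continuous.exp_smul_const {f : ℝ → ℝ} (hf : Continuous f) (A : 𝔸) :
    Continuous fun u => exp (f u • A) :=
  (differentiable_exp_smul_const ℝ A).continuous.comp hf

theorem eq_exp_smul_mul_of_hasDerivAt {G : 𝔸} {f : ℝ → 𝔸} (hf : ∀ s, HasDerivAt f (G * f s) s)
    (t : ℝ) : f t = exp (t • G) * f 0 := by
  have hderiv : ∀ s, HasDerivAt (fun s => exp (s • -G) * f s) 0 s := fun s => by
    have h := (hasDerivAt_exp_smul_const (-G) s).mul (hf s)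
    rwa [mul_neg, neg_mul, mul_assoc, neg_add_cancel] at h
  have hconst := is_const_of_deriv_eq_zero (fun s => (hderiv s).differentiableAt)
    (fun s => (hderiv s).deriv) t 0
  rw [zero_smul, exp_zero, one_mul, smul_neg, ← neg_smul] at hconst
  rw [← hconst, ← mul_assoc, exp_smul_mul_exp_neg_smul, one_mul]

theorem exp_smul_mul_integral_exp_neg_smul_mul_mul_exp_smul (A B : 𝔸) (t : ℝ) :
    exp (t • A) * ∫ u in (0 : ℝ)..t, exp (-u • A) * B * exp (u • A)
      = ∫ u in (0 : ℝ)..t, exp ((t - u) • A) * B * exp (u • A) := by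
  have hcont : Continuous fun u : ℝ => exp (-u • A) * B * exp (u • A) := by fun_prop
  have hmul := (ContinuousLinearMap.mul ℝ 𝔸 (exp (t • A))).intervalIntegral_comp_comm
    (hcont.intervalIntegrable (μ := MeasureTheory.volume) 0 t)
  simp only [ContinuousLinearMap.mul_apply'] at hmul
  rw [← hmul]
  refine intervalIntegral.integral_congr fun u _ => ?_
  simp only [← mul_assoc, sub_eq_add_neg, exp_add_smul]

theorem hasDerivAt_integral_exp_smul_mul_mul_exp_smul (A B : 𝔸) (s : ℝ) :
    HasDerivAt (fun s => ∫ u in (0 : ℝ)..s, exp ((s - u) • A) * B * exp (u • A))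
      (A * (∫ u in (0 : ℝ)..s, exp ((s - u) • A) * B * exp (u • A)) + B * exp (s • A)) s := by
  simp only [← exp_smul_mul_integral_exp_neg_smul_mul_mul_exp_smul]
  have hcont : Continuous fun u : ℝ => exp (-u • A) * B * exp (u • A) := by fun_prop
  have hint := intervalIntegral.integral_hasDerivAt_right (hcont.intervalIntegrable 0 s)
    hcont.stronglyMeasurable.stronglyMeasurableAtFilter hcont.continuousAt
  refine ((hasDerivAt_exp_smul_const' A s).mul hint).congr_deriv ?_
  rw [mul_assoc, ← mul_assoc (exp _), ← mul_assoc (exp _), exp_smul_mul_exp_neg_smul, one_mul]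

end BanachAlgebra

section Matrix

open scoped Matrix.Norms.Operator

variable {𝕜 : Type*} [NontriviallyNormedField 𝕜] [CompleteSpace 𝕜]
  {l m n o : Type*} [Fintype l] [Fintype m] [Fintype n] [Fintype o]

theorem HasDerivAt.matrix_fromBlocks {a : 𝕜 → Matrix n l 𝕜} {b : 𝕜 → Matrix n m 𝕜}
    {c : 𝕜 → Matrix o l 𝕜} {d : 𝕜 → Matrix o m 𝕜} {a' b' c' d'} {s : 𝕜}
    (ha : HasDerivAt a a' s) (hb : HasDerivAt b b' s) (hc : HasDerivAt c c' s)
    (hd : HasDerivAt d d' s) :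
    HasDerivAt (fun s => fromBlocks (a s) (b s) (c s) (d s)) (fromBlocks a' b' c' d') s := by
  let L : (Matrix n l 𝕜 × Matrix n m 𝕜) × (Matrix o l 𝕜 × Matrix o m 𝕜) →ₗ[𝕜]
      Matrix (n ⊕ o) (l ⊕ m) 𝕜 :=
    { toFun := fun x => fromBlocks x.1.1 x.1.2 x.2.1 x.2.2
      map_add' := fun x y => (fromBlocks_add ..).symm
      map_smul' := fun r x => (fromBlocks_smul ..).symm }
  exact (LinearMap.toContinuousLinearMap L).hasFDerivAt.comp_hasDerivAt s
    ((ha.prodMk hb).prodMk (hc.prodMk hd))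

theorem Matrix.intervalIntegral_apply {F : ℝ → Matrix m n ℝ} (hF : Continuous F) (a b : ℝ)
    (i : m) (j : n) : (∫ u in a..b, F u) i j = ∫ u in a..b, F u i j :=
  ((LinearMap.toContinuousLinearMap (entryLinearMap ℝ ℝ i j)).intervalIntegral_comp_comm
    (hF.intervalIntegrable a b)).symm

theorem Matrix.exp_smul_fromBlocks [DecidableEq m] (A B : Matrix m m ℝ) (t : ℝ) :
    exp (t • fromBlocks A B 0 A) = fromBlocks (exp (t • A))
      (∫ u in (0 : ℝ)..t, exp ((t - u) • A) * B * exp (u • A)) 0 (exp (t • A)) := by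
  set C : ℝ → Matrix m m ℝ := fun s => ∫ u in (0 : ℝ)..s, exp ((s - u) • A) * B * exp (u • A)
    with hC
  have hf : ∀ s, HasDerivAt (fun s => fromBlocks (exp (s • A)) (C s) 0 (exp (s • A)))
      (fromBlocks A B 0 A * fromBlocks (exp (s • A)) (C s) 0 (exp (s • A))) s := fun s => by
    refine (HasDerivAt.matrix_fromBlocks (hasDerivAt_exp_smul_const' A s)
      (hasDerivAt_integral_exp_smul_mul_mul_exp_smul A B s) (hasDerivAt_const s 0)
      (hasDerivAt_exp_smul_const' A s)).congr_deriv ?_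
    simp only [fromBlocks_multiply, mul_zero, zero_mul, add_zero, zero_add]
    -- The two sides differ only in the (definitionally equal) topologies put on matrices.
    rfl
  have h := (eq_exp_smul_mul_of_hasDerivAt hf t).symm
  simp only [hC, zero_smul, exp_zero, intervalIntegral.integral_same, fromBlocks_one,
    mul_one] at h
  exact h

end Matrix

theorem van_loan_block_exponential_general
    {p : ℕ} (A B : Matrix (Fin p) (Fin p) ℝ) (t : ℝ) :
    NormedSpace.exp (t • Matrix.fromBlocks A B 0 A)
      = Matrix.fromBlocks (NormedSpace.exp (t • A))
          (Matrix.of fun i j =>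
            ∫ u in (0 : ℝ)..t,
              (NormedSpace.exp ((t - u) • A) * B * NormedSpace.exp (u • A)) i j)
          0 (NormedSpace.exp (t • A)) := by
  rw [Matrix.exp_smul_fromBlocks]
  congr 1
  ext i j
  open scoped Matrix.Norms.Operator in
  exact Matrix.intervalIntegral_apply (by fun_prop) 0 t i j

/-- Van Loan's formula: For `p×p` matrices `A, B` and the `2p×2p` block
matrix `G = [[A, B], [0, A]]`, we have, for every `t ≥ 0`,
`exp(G t) = [[exp(A t), C(t)], [0, exp(A t)]]` where
`C(t) = ∫₀ᵗ exp(A(t-u)) B exp(A u) du`. -/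
theorem van_loan_block_exponential
    {p : ℕ} (A B : Matrix (Fin p) (Fin p) ℝ) (t : ℝ) (ht : 0 ≤ t) :
    NormedSpace.exp (t • Matrix.fromBlocks A B 0 A)
      = Matrix.fromBlocks (NormedSpace.exp (t • A))
          (Matrix.of fun i j =>
            ∫ u in (0 : ℝ)..t,
              (NormedSpace.exp ((t - u) • A) * B * NormedSpace.exp (u • A)) i j)
          0 (NormedSpace.exp (t • A)) :=
  van_loan_block_exponential_general A B t
end

section
/- Consider the EM setting for IPHs with absorption times τ⁽ⁿ⁾. The conditional expected number of absorptions from state i during (s_{k-1},s_k] equals Ō_{i,p+1}(k) = ∑ₙ 1{τ⁽ⁿ⁾ ∈ (s_{k-1},s_k]} · π P̄(0,τ⁽ⁿ⁾) eᵢ tᵢ(τ⁽ⁿ⁾) / (π P̄(0,τ⁽ⁿ⁾) t(τ⁽ⁿ⁾)), i.e., P(X⁽ⁿ⁾(τ⁽ⁿ⁾-) = i | τ⁽ⁿ⁾) = π P̄(0,τ⁽ⁿ⁾) eᵢ tᵢ(τ⁽ⁿ⁾) / f(τ⁽ⁿ⁾). -/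
open Matrix

attribute [local instance] Matrix.linftyOpNormedRing Matrix.linftyOpNormedAlgebra

open Filter Topology

/-!
Write `F(y) = π P̄(0,y) e` for the survival function. The numerator `N(h)` and the
denominator `D(h) = F(x) - F(x+h)` of the density quotient both vanish at `h = 0`, and
the forward equation `∂_y P̄(a,y) = P̄(a,y) T(y)` with `P̄(x,x) = I` gives
`N'(0) = (π P̄(0,x))ᵢ tᵢ(x)` and `D'(0) = π P̄(0,x) t(x) = f(x)`. Hence the quotient tends to
`N'(0) / D'(0)` as soon as `f(x) ≠ 0`, and the limit `c(x)` is the asserted ratio.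
-/

theorem HasDerivAt.tendsto_div_of_apply_eq_zero {𝕜 : Type*} [NontriviallyNormedField 𝕜]
    {f g : 𝕜 → 𝕜} {f' g' a : 𝕜} (hf : HasDerivAt f f' a) (hg : HasDerivAt g g' a)
    (hfa : f a = 0) (hga : g a = 0) (hg' : g' ≠ 0) :
    Tendsto (fun x => f x / g x) (𝓝[≠] a) (𝓝 (f' / g')) := by
  have hslope := (hasDerivAt_iff_tendsto_slope.1 hf).div (hasDerivAt_iff_tendsto_slope.1 hg) hg'
  refine hslope.congr' ?_
  filter_upwards [self_mem_nhdsWithin] with x hx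
  have hxa : x - a ≠ 0 := sub_ne_zero.2 hx
  simp only [slope_def_field, hfa, hga, sub_zero, Pi.div_apply]
  exact div_div_div_cancel_right₀ hxa _ _

section MatrixDeriv

variable {n : Type*} [Fintype n] [DecidableEq n]
  {M : ℝ → Matrix n n ℝ} {M' : Matrix n n ℝ} {t : ℝ}

theorem HasDerivAt.vecMul_dotProduct (hM : HasDerivAt M M' t) (u v : n → ℝ) :
    HasDerivAt (fun s => u ᵥ* M s ⬝ᵥ v) (u ᵥ* M' ⬝ᵥ v) t :=
  let L : Matrix n n ℝ →ₗ[ℝ] ℝ :=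
    { toFun := fun A => u ᵥ* A ⬝ᵥ v
      map_add' := fun A B => by simp only [vecMul_add, add_dotProduct]
      map_smul' := fun r A => by simp only [vecMul_smul, smul_dotProduct, RingHom.id_apply] }
  L.toContinuousLinearMap.hasFDerivAt.comp_hasDerivAt t hM

theorem HasDerivAt.mulVec_apply (hM : HasDerivAt M M' t) (v : n → ℝ) (i : n) :
    HasDerivAt (fun s => (M s *ᵥ v) i) ((M' *ᵥ v) i) t := by
  have h := hM.vecMul_dotProduct (Pi.single i 1) v
  simp_rw [single_one_vecMul] at h
  exact h

end MatrixDeriv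

theorem tendsto_absorption_density_quotient {n : Type*} [Fintype n] [DecidableEq n]
    {P : ℝ → ℝ → Matrix n n ℝ} {T : ℝ → Matrix n n ℝ} {tv : ℝ → n → ℝ} (π : n → ℝ) (i : n)
    (htv : ∀ x, tv x = -(T x *ᵥ 1))
    (hode : ∀ a u, HasDerivAt (fun y => P a y) (P a u * T u) u) (hid : ∀ a, P a a = 1)
    {x : ℝ} (hf : π ᵥ* P 0 x ⬝ᵥ tv x ≠ 0) :
    Tendsto
      (fun h => (π ᵥ* P 0 x) i * (1 - (P x (x + h) *ᵥ 1) i)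
        / (π ᵥ* P 0 x ⬝ᵥ 1 - π ᵥ* P 0 (x + h) ⬝ᵥ 1))
      (𝓝[>] 0) (𝓝 ((π ᵥ* P 0 x) i * tv x i / (π ᵥ* P 0 x ⬝ᵥ tv x))) := by
  have hshift (a : ℝ) : HasDerivAt (fun h => P a (x + h)) (P a x * T x) 0 :=
    HasDerivAt.comp_const_add x 0 (by rw [add_zero]; exact hode a x)
  have hnum : HasDerivAt (fun h => (π ᵥ* P 0 x) i * (1 - (P x (x + h) *ᵥ 1) i))
      ((π ᵥ* P 0 x) i * tv x i) 0 := by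
    simpa [hid, htv] using
      (((hshift x).mulVec_apply 1 i).const_sub 1).const_mul ((π ᵥ* P 0 x) i)
  have hden : HasDerivAt (fun h => π ᵥ* P 0 x ⬝ᵥ 1 - π ᵥ* P 0 (x + h) ⬝ᵥ 1)
      (π ᵥ* P 0 x ⬝ᵥ tv x) 0 := by
    simpa [htv, ← vecMul_vecMul, dotProduct_mulVec] using
      ((hshift 0).vecMul_dotProduct π 1).const_sub (π ᵥ* P 0 x ⬝ᵥ 1)
  exact (hnum.tendsto_div_of_apply_eq_zero hden (by simp [hid]) (by simp) hf).mono_left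
    (nhdsWithin_mono _ fun h hh => ne_of_gt hh)

theorem conditional_expected_absorptions_general
    {p : ℕ} (P : ℝ → ℝ → Matrix (Fin p) (Fin p) ℝ)
    (T : ℝ → Matrix (Fin p) (Fin p) ℝ)
    (tv : ℝ → Fin p → ℝ) (htv : ∀ x, tv x = -(T x *ᵥ (1 : Fin p → ℝ)))
    (π : Fin p → ℝ)
    -- Kolmogorov forward equation and initial condition for the product integral:
    (hode : ∀ a u : ℝ, HasDerivAt (fun y => P a y) (P a u * T u) u)
    (hid : ∀ a : ℝ, P a a = 1)
    (i : Fin p)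
    -- `c x` is the conditional probability `P(X(τ-) = i | τ = x)` (density limit):
    (c : ℝ → ℝ)
    (hc : ∀ x : ℝ, 0 < x → π ᵥ* P 0 x ⬝ᵥ tv x ≠ 0 →
      Filter.Tendsto
        (fun h : ℝ =>
          ((π ᵥ* P 0 x) i * (1 - (P x (x + h) *ᵥ (1 : Fin p → ℝ)) i))
            / ((π ᵥ* P 0 x ⬝ᵥ (1 : Fin p → ℝ)) - (π ᵥ* P 0 (x + h) ⬝ᵥ (1 : Fin p → ℝ))))
        (nhdsWithin 0 (Set.Ioi 0)) (nhds (c x))) :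
    -- then `c` has the asserted form, and the conditional expected occurrences of
    -- absorption in a grid interval `(a, b]` are given by the stated sum:
    (∀ x : ℝ, 0 < x → π ᵥ* P 0 x ⬝ᵥ tv x ≠ 0 →
        c x = (π ᵥ* P 0 x) i * tv x i / (π ᵥ* P 0 x ⬝ᵥ tv x)) ∧
    (∀ (N : ℕ) (τ : ℕ → ℝ) (a b : ℝ),
        (∀ n, 0 < τ n) → (∀ n, π ᵥ* P 0 (τ n) ⬝ᵥ tv (τ n) ≠ 0) →
        ∑ n ∈ Finset.range N, (if τ n ∈ Set.Ioc a b then c (τ n) else 0)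
          = ∑ n ∈ Finset.range N,
              (if τ n ∈ Set.Ioc a b then
                (π ᵥ* P 0 (τ n)) i * tv (τ n) i / (π ᵥ* P 0 (τ n) ⬝ᵥ tv (τ n))
              else 0)) := by
  have hformula (x : ℝ) (hx : 0 < x) (hf : π ᵥ* P 0 x ⬝ᵥ tv x ≠ 0) :
      c x = (π ᵥ* P 0 x) i * tv x i / (π ᵥ* P 0 x ⬝ᵥ tv x) :=
    tendsto_nhds_unique (hc x hx hf) (tendsto_absorption_density_quotient π i htv hode hid hf)
  refine ⟨hformula, fun N τ a b hτ hf => Finset.sum_congr rfl fun n _ => ?_⟩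
  rw [hformula (τ n) (hτ n) (hf n)]

/-- In the EM setting for IPHs with absorption times `τ⁽ⁿ⁾`, the
conditional probability of being absorbed from state `i`, given the absorption time,
is `P(X(τ-) = i | τ = x) = π P̄(0,x) eᵢ tᵢ(x) / f(x)` with `f(x) = π P̄(0,x) t(x)`:
in density form it is the limit as `h ↓ 0` of
`P(X(x)=i, x < τ ≤ x+h) / P(x < τ ≤ x+h)`, where
`P(X(x)=i, τ>y) = (π P̄(0,x))ᵢ (eᵢ' P̄(x,y) e)` and `P(τ>y) = π P̄(0,y) e`.
Consequently, if `c(x)` denotes this conditional probability, the conditional expected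
number of absorptions from `i` during `(s_{k-1}, s_k]` equals
`Ō_{i,p+1}(k) = ∑ₙ 1{τ⁽ⁿ⁾ ∈ (s_{k-1},s_k]} π P̄(0,τ⁽ⁿ⁾) eᵢ tᵢ(τ⁽ⁿ⁾) / f(τ⁽ⁿ⁾)`. -/
theorem conditional_expected_absorptions
    {p : ℕ} (P : ℝ → ℝ → Matrix (Fin p) (Fin p) ℝ)
    (T : ℝ → Matrix (Fin p) (Fin p) ℝ)
    (tv : ℝ → Fin p → ℝ) (htv : ∀ x, tv x = -(T x *ᵥ (1 : Fin p → ℝ)))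
    (π : Fin p → ℝ) (hπ0 : ∀ i, 0 ≤ π i) (hπ1 : ∑ i, π i = 1)
    -- Kolmogorov forward equation and initial condition for the product integral:
    (hode : ∀ a u : ℝ, HasDerivAt (fun y => P a y) (P a u * T u) u)
    (hid : ∀ a : ℝ, P a a = 1)
    (i : Fin p)
    -- `c x` is the conditional probability `P(X(τ-) = i | τ = x)` (density limit):
    (c : ℝ → ℝ)
    (hc : ∀ x : ℝ, 0 < x → π ᵥ* P 0 x ⬝ᵥ tv x ≠ 0 →
      Filter.Tendsto
        (fun h : ℝ =>
          ((π ᵥ* P 0 x) i * (1 - (P x (x + h) *ᵥ (1 : Fin p → ℝ)) i))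
            / ((π ᵥ* P 0 x ⬝ᵥ (1 : Fin p → ℝ)) - (π ᵥ* P 0 (x + h) ⬝ᵥ (1 : Fin p → ℝ))))
        (nhdsWithin 0 (Set.Ioi 0)) (nhds (c x))) :
    -- then `c` has the asserted form, and the conditional expected occurrences of
    -- absorption in a grid interval `(a, b]` are given by the stated sum:
    (∀ x : ℝ, 0 < x → π ᵥ* P 0 x ⬝ᵥ tv x ≠ 0 →
        c x = (π ᵥ* P 0 x) i * tv x i / (π ᵥ* P 0 x ⬝ᵥ tv x)) ∧
    (∀ (N : ℕ) (τ : ℕ → ℝ) (a b : ℝ),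
        (∀ n, 0 < τ n) → (∀ n, π ᵥ* P 0 (τ n) ⬝ᵥ tv (τ n) ≠ 0) →
        ∑ n ∈ Finset.range N, (if τ n ∈ Set.Ioc a b then c (τ n) else 0)
          = ∑ n ∈ Finset.range N,
              (if τ n ∈ Set.Ioc a b then
                (π ᵥ* P 0 (τ n)) i * tv (τ n) i / (π ᵥ* P 0 (τ n) ⬝ᵥ tv (τ n))
              else 0)) :=
  conditional_expected_absorptions_general P T tv htv π hode hid i c hc
end
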